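/- arXiv:2206.13922 — 3 statements merged into one kernel-verified Lean document; each statement's English description precedes it below -/
import Mathlib

section
/- For real α, γ > 0 and real r ≠ 0, with ξ(n) = r/n^γ, one has ξ(n+1)(n−1)^α n^α + ξ(n−1)(n+1)^α n^α − 2ξ(n)(n−1)^α(n+1)^α = r·n^{2α−γ−2}·((α+γ)(α+γ+1) + o(1)) as n → ∞. -/
/-!
Put `x = 1/n`. Since `n ± 1 = n (1 ± x)`, the quotient equals
`(1 - x)^α (1 + x)^α · (f x + f (-x) - 2 f 0) / x²` with `f y = (1 + y)^(-(α+γ))`.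
The first factor tends to `1`, and a symmetric second difference quotient tends to the second
derivative `f'' 0 = (α+γ)(α+γ+1)`: one application of l'Hôpital's rule turns it into the mean
of the two one-sided difference quotients of `f'` at `0`.
-/

open Filter Topology

theorem HasDerivAt.tendsto_symmetric_second_difference_quotient {f f' : ℝ → ℝ} {a c : ℝ}
    (hf : ∀ᶠ x in 𝓝 a, HasDerivAt f (f' x) x) (hf' : HasDerivAt f' c a) :
    Tendsto (fun h => (f (a + h) + f (a - h) - 2 * f a) / h ^ 2) (𝓝[≠] 0) (𝓝 c) := by
  have hplus : Tendsto (fun h : ℝ => a + h) (𝓝 0) (𝓝 a) := by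
    simpa using (continuous_const_add a).tendsto 0
  have hminus : Tendsto (fun h : ℝ => a - h) (𝓝 0) (𝓝 a) := by
    simpa using (continuous_sub_left a).tendsto 0
  have hnum : ∀ᶠ h in 𝓝 (0 : ℝ), HasDerivAt (fun h => f (a + h) + f (a - h) - 2 * f a)
      (f' (a + h) - f' (a - h)) h := by
    filter_upwards [hplus.eventually hf, hminus.eventually hf] with h hp hm
    simpa [sub_eq_add_neg] using
      ((hp.comp_const_add a h).add (hm.comp_const_sub a h)).sub_const (2 * f a)
  have hden (h : ℝ) : HasDerivAt (fun h => h ^ 2) (2 * h) h := by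
    simpa using hasDerivAt_pow 2 h
  have hfa : ContinuousAt f a := hf.self_of_nhds.continuousAt
  refine HasDerivAt.lhopital_zero_nhdsNE (nhdsWithin_le_nhds hnum) (.of_forall hden)
    (eventually_nhdsWithin_of_forall fun h hh => mul_ne_zero two_ne_zero hh) ?_ ?_ ?_
  · refine tendsto_nhdsWithin_of_tendsto_nhds ?_
    have := ((hfa.tendsto.comp hplus).add (hfa.tendsto.comp hminus)).sub_const (2 * f a)
    rwa [show f a + f a - 2 * f a = 0 by ring] at this
  · refine tendsto_nhdsWithin_of_tendsto_nhds ?_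
    simpa using (continuous_pow 2).tendsto (0 : ℝ)
  · have hright := hf'.tendsto_slope_zero
    have hleft :=
      (HasDerivAt.comp_const_sub a 0 (f := f') (by simpa using hf')).tendsto_slope_zero
    have hmean := (hright.sub hleft).div_const 2
    simp only [smul_eq_mul, zero_add, sub_zero] at hmean
    rw [show c = (c - -c) / 2 by ring]
    refine hmean.congr' (eventually_nhdsWithin_of_forall fun h hh => ?_)
    field_simp
    ring

theorem tendsto_one_add_rpow_add_one_sub_rpow_sub_two_div_sq (p : ℝ) :
    Tendsto (fun x : ℝ => ((1 + x) ^ p + (1 - x) ^ p - 2) / x ^ 2) (𝓝[≠] 0)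
      (𝓝 (p * (p - 1))) := by
  have hderiv (q : ℝ) {y : ℝ} (hy : -1 < y) :
      HasDerivAt (fun y : ℝ => (1 + y) ^ q) (q * (1 + y) ^ (q - 1)) y := by
    simpa using ((hasDerivAt_id y).const_add 1).rpow_const (p := q)
      (Or.inl (by simp only [id_eq]; linarith))
  have h := HasDerivAt.tendsto_symmetric_second_difference_quotient (a := 0)
    ((eventually_gt_nhds (by norm_num : (-1 : ℝ) < 0)).mono fun y hy => hderiv p hy)
    ((hderiv (p - 1) (by norm_num : (-1 : ℝ) < 0)).const_mul p)
  simpa [mul_comm 2, ← sub_eq_add_neg] using h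

theorem weighted_second_difference_div_eq (α γ r N : ℝ) (hr : r ≠ 0) (hN : 1 < N) :
    ((r / (N + 1) ^ γ) * (N - 1) ^ α * N ^ α + (r / (N - 1) ^ γ) * (N + 1) ^ α * N ^ α
        - 2 * (r / N ^ γ) * (N - 1) ^ α * (N + 1) ^ α) / (r * N ^ (2 * α - γ - 2)) =
      (1 - N⁻¹) ^ α * (1 + N⁻¹) ^ α *
        (((1 + N⁻¹) ^ (-(α + γ)) + (1 - N⁻¹) ^ (-(α + γ)) - 2) / (N⁻¹) ^ 2) := by
  have hN0 : 0 < N := by linarith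
  have hp : 0 < 1 + N⁻¹ := by positivity
  have hm : 0 < 1 - N⁻¹ := by rw [sub_pos]; exact inv_lt_one_of_one_lt₀ hN
  have hN1 : N + 1 = N * (1 + N⁻¹) := by field_simp
  have hN2 : N - 1 = N * (1 - N⁻¹) := by field_simp
  rw [hN1, hN2, Real.mul_rpow hN0.le hp.le, Real.mul_rpow hN0.le hm.le,
    Real.mul_rpow hN0.le hp.le, Real.mul_rpow hN0.le hm.le, Real.rpow_neg hp.le,
    Real.rpow_neg hm.le, Real.rpow_add hp, Real.rpow_add hm,
    show 2 * α - γ - 2 = α + α - γ - 2 by ring, Real.rpow_sub hN0, Real.rpow_sub hN0,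
    Real.rpow_add hN0, Real.rpow_two]
  have : N ^ α ≠ 0 := by positivity
  have : N ^ γ ≠ 0 := by positivity
  have : (1 + N⁻¹) ^ α ≠ 0 := by positivity
  have : (1 + N⁻¹) ^ γ ≠ 0 := by positivity
  have : (1 - N⁻¹) ^ α ≠ 0 := by positivity
  have : (1 - N⁻¹) ^ γ ≠ 0 := by positivity
  -- Freeze the powers as atoms, so that `field_simp` does not rewrite `1 ± N⁻¹` inside them.
  generalize N ^ α = A, N ^ γ = G, (1 + N⁻¹) ^ α = P, (1 + N⁻¹) ^ γ = Q,
    (1 - N⁻¹) ^ α = M, (1 - N⁻¹) ^ γ = R at *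
  field_simp

theorem stmt_13_general (α γ r : ℝ) (hr : r ≠ 0) :
    Filter.Tendsto
      (fun n : ℕ =>
        ((r / ((n : ℝ) + 1) ^ γ) * ((n : ℝ) - 1) ^ α * (n : ℝ) ^ α
          + (r / ((n : ℝ) - 1) ^ γ) * ((n : ℝ) + 1) ^ α * (n : ℝ) ^ α
          - 2 * (r / (n : ℝ) ^ γ) * ((n : ℝ) - 1) ^ α * ((n : ℝ) + 1) ^ α) /
        (r * (n : ℝ) ^ (2 * α - γ - 2)))
      Filter.atTop (nhds ((α + γ) * (α + γ + 1))) := by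
  have hweight : Tendsto (fun x : ℝ => (1 - x) ^ α * (1 + x) ^ α) (𝓝[≠] 0) (𝓝 1) := by
    refine tendsto_nhdsWithin_of_tendsto_nhds ?_
    have hcont : ContinuousAt (fun x : ℝ => (1 - x) ^ α * (1 + x) ^ α) 0 := by
      fun_prop (disch := norm_num)
    simpa using hcont.tendsto
  have hinv : Tendsto (fun n : ℕ => (n : ℝ)⁻¹) atTop (𝓝[≠] 0) :=
    tendsto_nhdsWithin_of_tendsto_nhds_of_eventually_within _ tendsto_inv_atTop_nhds_zero_nat
      ((eventually_ne_atTop 0).mono fun n hn => by simpa using hn)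
  have hlim := (hweight.mul
    (tendsto_one_add_rpow_add_one_sub_rpow_sub_two_div_sq (-(α + γ)))).comp hinv
  rw [one_mul, show -(α + γ) * (-(α + γ) - 1) = (α + γ) * (α + γ + 1) by ring] at hlim
  refine hlim.congr' ?_
  filter_upwards [eventually_gt_atTop 1] with n hn
  exact (weighted_second_difference_div_eq α γ r n hr (by exact_mod_cast hn)).symm

theorem stmt_13 (α γ r : ℝ) (hα : 0 < α) (hγ : 0 < γ) (hr : r ≠ 0) :
    Filter.Tendsto
      (fun n : ℕ =>
        ((r / ((n : ℝ) + 1) ^ γ) * ((n : ℝ) - 1) ^ α * (n : ℝ) ^ α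
          + (r / ((n : ℝ) - 1) ^ γ) * ((n : ℝ) + 1) ^ α * (n : ℝ) ^ α
          - 2 * (r / (n : ℝ) ^ γ) * ((n : ℝ) - 1) ^ α * ((n : ℝ) + 1) ^ α) /
        (r * (n : ℝ) ^ (2 * α - γ - 2)))
      Filter.atTop (nhds ((α + γ) * (α + γ + 1))) :=
  stmt_13_general α γ r hr
end

section
/- For real α, γ > 0 and real r ≠ 0, with ξ(n) = r/n^γ, one has ξ(n−1)ξ(n+1)·n^{2α} − ξ(n)^2·(n+1)^α(n−1)^α = r^2·n^{2α−2γ−2}·(α + γ + o(1)) as n → ∞. -/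
/-!
With `u = 1 - 1/n²`, so that `(n - 1)(n + 1) = n² u`, the quotient equals
`(u^(-γ) - u^α) / (1/n²)`, a difference quotient at `0` of `t ↦ (1 - t)^(-γ) - (1 - t)^α`,
whose derivative there is `γ + α`.
-/

open Real Filter Topology

lemma hasDerivAt_one_sub_rpow_zero (p : ℝ) : HasDerivAt (fun t : ℝ => (1 - t) ^ p) (-p) 0 := by
  have h := ((hasDerivAt_id (0 : ℝ)).const_sub 1).rpow_const (p := p) (Or.inl (by simp))
  simpa using h

lemma tendsto_one_sub_rpow_neg_sub_rpow_div (α γ : ℝ) :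
    Tendsto (fun t : ℝ => ((1 - t) ^ (-γ) - (1 - t) ^ α) / t) (𝓝[≠] 0) (𝓝 (α + γ)) := by
  have hderiv : HasDerivAt (fun t : ℝ => (1 - t) ^ (-γ) - (1 - t) ^ α) (α + γ) 0 := by
    have h := (hasDerivAt_one_sub_rpow_zero (-γ)).sub (hasDerivAt_one_sub_rpow_zero α)
    rwa [show - -γ - -α = α + γ by ring] at h
  refine (hasDerivAt_iff_tendsto_slope.mp hderiv).congr fun t => ?_
  simp [slope_def_field]

lemma tendsto_inv_sq_atTop_nhdsNE_zero :
    Tendsto (fun x : ℝ => (x ^ 2)⁻¹) atTop (𝓝[≠] 0) :=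
  tendsto_nhdsWithin_mono_right (fun _ hx => ne_of_gt hx)
    (tendsto_inv_atTop_nhdsGT_zero.comp (tendsto_pow_atTop two_ne_zero))

lemma sub_one_rpow_mul_add_one_rpow {x : ℝ} (hx : 1 ≤ x) (p : ℝ) :
    (x - 1) ^ p * (x + 1) ^ p = x ^ (2 * p) * (1 - (x ^ 2)⁻¹) ^ p := by
  have hx0 : 0 < x := by linarith
  have hu : 0 ≤ 1 - (x ^ 2)⁻¹ := sub_nonneg.mpr (inv_le_one_of_one_le₀ (one_le_pow₀ hx))
  rw [← mul_rpow (by linarith) (by linarith), rpow_mul hx0.le, rpow_two,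
    ← mul_rpow (by positivity) hu]
  congr 1
  field_simp
  ring

lemma quotient_eq_div_inv_sq (α γ : ℝ) {r : ℝ} (hr : r ≠ 0) {x : ℝ} (hx : 1 < x) :
    ((r / (x - 1) ^ γ) * (r / (x + 1) ^ γ) * x ^ (2 * α)
      - (r / x ^ γ) ^ 2 * (x + 1) ^ α * (x - 1) ^ α) / (r ^ 2 * x ^ (2 * α - 2 * γ - 2))
    = ((1 - (x ^ 2)⁻¹) ^ (-γ) - (1 - (x ^ 2)⁻¹) ^ α) / (x ^ 2)⁻¹ := by
  have hx0 : 0 < x := by linarith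
  have hu : 0 < 1 - (x ^ 2)⁻¹ := sub_pos.mpr (inv_lt_one_of_one_lt₀ (one_lt_pow₀ hx two_ne_zero))
  have hprodγ := sub_one_rpow_mul_add_one_rpow hx.le γ
  have hprodα := sub_one_rpow_mul_add_one_rpow hx.le α
  have hsq : (x ^ γ) ^ 2 = x ^ (2 * γ) := by
    rw [← rpow_natCast, ← rpow_mul hx0.le, mul_comm]; norm_num
  have hexp : x ^ (2 * α - 2 * γ - 2) = x ^ (2 * α) / (x ^ (2 * γ) * x ^ 2) := by
    rw [sub_sub, rpow_sub hx0, rpow_add hx0, ← rpow_natCast]; norm_num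
  have hm : (x - 1) ^ γ ≠ 0 := by positivity
  have hp : (x + 1) ^ γ ≠ 0 := by positivity
  rw [div_mul_div_comm, mul_assoc ((r / x ^ γ) ^ 2), mul_comm ((x + 1) ^ α), hprodα, hprodγ, div_pow,
    hsq, hexp, rpow_neg hu.le]
  field_simp

theorem stmt_14_general (α γ r : ℝ) (hr : r ≠ 0) :
    Filter.Tendsto
      (fun n : ℕ =>
        ((r / ((n : ℝ) - 1) ^ γ) * (r / ((n : ℝ) + 1) ^ γ) * (n : ℝ) ^ (2 * α)
          - (r / (n : ℝ) ^ γ) ^ 2 * ((n : ℝ) + 1) ^ α * ((n : ℝ) - 1) ^ α) /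
        (r ^ 2 * (n : ℝ) ^ (2 * α - 2 * γ - 2)))
      Filter.atTop (nhds (α + γ)) := by
  have hreal : Tendsto (fun x : ℝ =>
      ((r / (x - 1) ^ γ) * (r / (x + 1) ^ γ) * x ^ (2 * α)
        - (r / x ^ γ) ^ 2 * (x + 1) ^ α * (x - 1) ^ α) / (r ^ 2 * x ^ (2 * α - 2 * γ - 2)))
      atTop (𝓝 (α + γ)) := by
    refine ((tendsto_one_sub_rpow_neg_sub_rpow_div α γ).comp
      tendsto_inv_sq_atTop_nhdsNE_zero).congr' ?_
    filter_upwards [eventually_gt_atTop 1] with x hx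
    exact (quotient_eq_div_inv_sq α γ hr hx).symm
  exact hreal.comp tendsto_natCast_atTop_atTop

theorem stmt_14 (α γ r : ℝ) (hα : 0 < α) (hγ : 0 < γ) (hr : r ≠ 0) :
    Filter.Tendsto
      (fun n : ℕ =>
        ((r / ((n : ℝ) - 1) ^ γ) * (r / ((n : ℝ) + 1) ^ γ) * (n : ℝ) ^ (2 * α)
          - (r / (n : ℝ) ^ γ) ^ 2 * ((n : ℝ) + 1) ^ α * ((n : ℝ) - 1) ^ α) /
        (r ^ 2 * (n : ℝ) ^ (2 * α - 2 * γ - 2)))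
      Filter.atTop (nhds (α + γ)) :=
  stmt_14_general α γ r hr
end

section
/- Let b_n be the central trinomial coefficients (b_n = Σ_{k=0}^{⌊n/2⌋} C(n,2k)·C(2k,k)). Then {b_n} is log-convex for n ≥ 8: b_{n−1}·b_{n+1} > b_n^2 for all n ≥ 8. -/
/-!
Pascal's rule splits the first and second differences of `b` into sums of
`C(n, 2k + 1) C(2k + 2, k + 1)` and `C(n, 2k) C(2k + 2, k + 1)`, and the identity
`(k + 1) C(2k + 2, k + 1) = 2 (2k + 1) C(2k, k)` relates these termwise to `b n`; this gives
the recurrence. By the recurrence the ratio `r n = b (n + 1) / b n` satisfies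
`r (n + 1) = (2n + 3 + 3(n + 1) / r n) / (n + 2)`, a decreasing function of `r n`. Truncating
the expansion `r n = 3 - 3/(2n) + 27/(16n²) + O(n⁻³)` with `-c/n³` for `c = 2` and `c = 1`
gives a lower and an upper bound that this map preserves for `n ≥ 7`, and they hold at `n = 7`.
Since the upper bound at `n` lies below the lower bound at `n + 1`, the ratios increase.
-/

open Finset Nat

def centralTrinomial (n : ℕ) : ℕ :=
  ∑ k ∈ range (n / 2 + 1), n.choose (2 * k) * (2 * k).choose k

lemma sum_range_choose_mul_of_le {n N M : ℕ} (g f : ℕ → ℕ) (hNM : N ≤ M)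
    (hg : ∀ k, N ≤ k → n < g k) :
    ∑ k ∈ range M, n.choose (g k) * f k = ∑ k ∈ range N, n.choose (g k) * f k := by
  refine (sum_subset (range_subset_range.2 hNM) fun k _ hkN ↦ ?_).symm
  rw [choose_eq_zero_of_lt (hg k (by simpa using hkN)), zero_mul]

lemma centralTrinomial_eq_sum_range {n N : ℕ} (hN : n / 2 < N) :
    centralTrinomial n = ∑ k ∈ range N, n.choose (2 * k) * centralBinom k :=
  (sum_range_choose_mul_of_le _ centralBinom hN fun k hk ↦ by omega).symm

lemma centralTrinomial_eq_one_add_sum {n N : ℕ} (hN : n / 2 ≤ N) :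
    centralTrinomial n = 1 + ∑ k ∈ range N, n.choose (2 * (k + 1)) * centralBinom (k + 1) := by
  rw [centralTrinomial_eq_sum_range (Nat.lt_succ_of_le hN), sum_range_succ', add_comm]
  simp

def centralTrinomialDiff (n : ℕ) : ℕ :=
  ∑ k ∈ range (n + 1), n.choose (2 * k + 1) * centralBinom (k + 1)

def centralTrinomialDiff₂ (n : ℕ) : ℕ :=
  ∑ k ∈ range (n + 1), n.choose (2 * k) * centralBinom (k + 1)

lemma centralTrinomial_pos (n : ℕ) : 0 < centralTrinomial n :=
  sum_pos (fun k hk ↦ Nat.mul_pos (choose_pos (by simp at hk; omega)) (centralBinom_pos k))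
    ⟨0, by simp⟩

lemma centralTrinomial_succ (n : ℕ) :
    centralTrinomial (n + 1) = centralTrinomial n + centralTrinomialDiff n := by
  have pascal (k : ℕ) :
      (n + 1).choose (2 * (k + 1)) = n.choose (2 * k + 1) + n.choose (2 * (k + 1)) :=
    choose_succ_succ' n (2 * k + 1)
  rw [centralTrinomial_eq_one_add_sum (N := n + 1) (by omega),
    centralTrinomial_eq_one_add_sum (N := n + 1) (by omega), centralTrinomialDiff]
  simp only [pascal, add_mul, sum_add_distrib]
  ring

lemma centralTrinomialDiff_succ (n : ℕ) :
    centralTrinomialDiff (n + 1) = centralTrinomialDiff n + centralTrinomialDiff₂ n := by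
  rw [centralTrinomialDiff, centralTrinomialDiff, centralTrinomialDiff₂]
  simp only [choose_succ_succ', add_mul, sum_add_distrib]
  rw [sum_range_choose_mul_of_le (2 * · + 1) _ (le_succ _) (fun k hk ↦ by omega),
    sum_range_choose_mul_of_le (2 * ·) _ (le_succ _) (fun k hk ↦ by omega), add_comm]

lemma choose_mul_centralBinom_succ (n k : ℕ) :
    (n + 2) * (n.choose (2 * k) * centralBinom (k + 1))
      + n.choose (2 * k + 1) * centralBinom (k + 1)
      = 4 * (n + 1) * (n.choose (2 * k) * centralBinom k) := by
  have hc := succ_mul_centralBinom_succ k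
  have hb := choose_succ_right_eq n (2 * k)
  refine Nat.eq_of_mul_eq_mul_left k.add_one_pos ?_
  rcases lt_or_ge n (2 * k) with h | h
  · simp [choose_eq_zero_of_lt h, choose_eq_zero_of_lt (h.trans (lt_succ_self _))]
  · obtain ⟨d, rfl⟩ := Nat.exists_eq_add_of_le h
    rw [Nat.add_sub_cancel_left] at hb
    linear_combination ((2 * k + d + 2) * (2 * k + d).choose (2 * k)
      + (2 * k + d).choose (2 * k + 1)) * hc + 2 * centralBinom k * hb

lemma mul_centralTrinomialDiff₂_add_centralTrinomialDiff (n : ℕ) :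
    (n + 2) * centralTrinomialDiff₂ n + centralTrinomialDiff n
      = 4 * (n + 1) * centralTrinomial n := by
  rw [centralTrinomialDiff₂, centralTrinomialDiff,
    centralTrinomial_eq_sum_range (N := n + 1) (by omega), mul_sum, mul_sum, ← sum_add_distrib]
  exact sum_congr rfl fun k _ ↦ choose_mul_centralBinom_succ n k

theorem centralTrinomial_recurrence (n : ℕ) :
    (n + 2) * centralTrinomial (n + 2)
      = (2 * n + 3) * centralTrinomial (n + 1) + 3 * (n + 1) * centralTrinomial n := by
  rw [centralTrinomial_succ (n + 1), centralTrinomialDiff_succ, centralTrinomial_succ n]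
  linear_combination mul_centralTrinomialDiff₂_add_centralTrinomialDiff n

noncomputable def ratioBound (c t : ℝ) : ℝ := 3 - 3 / (2 * t) + 27 / (16 * t ^ 2) - c / t ^ 3

noncomputable def ratioStep (t r : ℝ) : ℝ := (2 * t + 3 + 3 * (t + 1) / r) / (t + 2)

lemma ratioBound_eq (c : ℝ) {t : ℝ} (ht : t ≠ 0) :
    ratioBound c t = (48 * t ^ 3 - 24 * t ^ 2 + 27 * t - 16 * c) / (16 * t ^ 3) := by
  unfold ratioBound
  field_simp
  ring

lemma ratioBound_two_pos {t : ℝ} (ht : 7 ≤ t) : 0 < ratioBound 2 t := by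
  rw [ratioBound_eq _ (by positivity)]
  exact div_pos (by nlinarith) (by positivity)

lemma ratioStep_div (t : ℝ) {p q : ℝ} (hp : p ≠ 0) :
    ratioStep t (p / q) = ((2 * t + 3) * p + 3 * (t + 1) * q) / ((t + 2) * p) := by
  unfold ratioStep
  field_simp

lemma ratioStep_le_ratioStep {t r s : ℝ} (ht : 0 ≤ t) (hr : 0 < r) (hrs : r ≤ s) :
    ratioStep t s ≤ ratioStep t r := by
  unfold ratioStep
  gcongr

lemma ratioBound_two_succ_le_ratioStep {t : ℝ} (ht : 7 ≤ t) :
    ratioBound 2 (t + 1) ≤ ratioStep t (ratioBound 1 t) := by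
  have hU : 0 < 48 * t ^ 3 - 24 * t ^ 2 + 27 * t - 16 * 1 := by nlinarith
  rw [ratioBound_eq _ (by positivity), ratioBound_eq _ (by positivity), ratioStep_div _ hU.ne',
    div_le_div_iff₀ (by positivity) (by positivity), ← sub_nonneg]
  obtain ⟨s, hs, rfl⟩ : ∃ s, 0 ≤ s ∧ t = s + 7 := ⟨t - 7, by linarith, by ring⟩
  ring_nf
  positivity

lemma ratioStep_ratioBound_two_le {t : ℝ} (ht : 7 ≤ t) :
    ratioStep t (ratioBound 2 t) ≤ ratioBound 1 (t + 1) := by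
  have hL : 0 < 48 * t ^ 3 - 24 * t ^ 2 + 27 * t - 16 * 2 := by nlinarith
  rw [ratioBound_eq _ (by positivity), ratioBound_eq _ (by positivity), ratioStep_div _ hL.ne',
    div_le_div_iff₀ (by positivity) (by positivity), ← sub_nonneg]
  obtain ⟨s, hs, rfl⟩ : ∃ s, 0 ≤ s ∧ t = s + 7 := ⟨t - 7, by linarith, by ring⟩
  ring_nf
  positivity

lemma ratioBound_one_lt_ratioBound_two_succ {t : ℝ} (ht : 7 ≤ t) :
    ratioBound 1 t < ratioBound 2 (t + 1) := by
  rw [ratioBound_eq _ (by positivity), ratioBound_eq _ (by positivity),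
    div_lt_div_iff₀ (by positivity) (by positivity), ← sub_pos]
  obtain ⟨s, hs, rfl⟩ : ∃ s, 0 ≤ s ∧ t = s + 7 := ⟨t - 7, by linarith, by ring⟩
  ring_nf
  positivity

section Recurrence

variable {x : ℕ → ℝ}

lemma ratio_succ_eq (hx : ∀ n, 0 < x n)
    (hrec : ∀ n : ℕ, (n + 2) * x (n + 2) = (2 * n + 3) * x (n + 1) + 3 * (n + 1) * x n)
    (n : ℕ) : x (n + 2) / x (n + 1) = ratioStep n (x (n + 1) / x n) := by
  rw [ratioStep_div _ (hx _).ne', ← hrec, mul_div_mul_left _ _ (by positivity)]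

lemma ratio_mem_Icc (hx : ∀ n, 0 < x n)
    (hrec : ∀ n : ℕ, (n + 2) * x (n + 2) = (2 * n + 3) * x (n + 1) + 3 * (n + 1) * x n)
    {n₀ : ℕ} (h₀ : 7 ≤ n₀)
    (hbase : x (n₀ + 1) / x n₀ ∈ Set.Icc (ratioBound 2 n₀) (ratioBound 1 n₀))
    {n : ℕ} (hn : n₀ ≤ n) :
    x (n + 1) / x n ∈ Set.Icc (ratioBound 2 n) (ratioBound 1 n) := by
  induction n, hn using Nat.le_induction with
  | base => exact hbase
  | succ n hn ih =>
    have ht : (7 : ℝ) ≤ n := by exact_mod_cast h₀.trans hn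
    have hr : 0 < x (n + 1) / x n := div_pos (hx _) (hx _)
    rw [ratio_succ_eq hx hrec, Nat.cast_succ]
    exact ⟨(ratioBound_two_succ_le_ratioStep ht).trans
        (ratioStep_le_ratioStep (by positivity) hr ih.2),
      (ratioStep_le_ratioStep (by positivity) (ratioBound_two_pos ht) ih.1).trans
        (ratioStep_ratioBound_two_le ht)⟩

lemma sq_lt_mul_of_ratio_mem_Icc (hx : ∀ n, 0 < x n)
    (hrec : ∀ n : ℕ, (n + 2) * x (n + 2) = (2 * n + 3) * x (n + 1) + 3 * (n + 1) * x n)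
    {n₀ : ℕ} (h₀ : 7 ≤ n₀)
    (hbase : x (n₀ + 1) / x n₀ ∈ Set.Icc (ratioBound 2 n₀) (ratioBound 1 n₀))
    {n : ℕ} (hn : n₀ ≤ n) : x (n + 1) ^ 2 < x n * x (n + 2) := by
  have ht : (7 : ℝ) ≤ n := by exact_mod_cast h₀.trans hn
  have hlt : x (n + 1) / x n < x (n + 2) / x (n + 1) := by
    calc x (n + 1) / x n ≤ ratioBound 1 n := (ratio_mem_Icc hx hrec h₀ hbase hn).2
      _ < ratioBound 2 (n + 1) := ratioBound_one_lt_ratioBound_two_succ ht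
      _ ≤ x (n + 2) / x (n + 1) := by
        exact_mod_cast (ratio_mem_Icc hx hrec h₀ hbase (hn.trans n.le_succ)).1
  rw [div_lt_div_iff₀ (hx _) (hx _)] at hlt
  linarith

end Recurrence

lemma centralTrinomial_ratio_seven_mem_Icc :
    (centralTrinomial 8 : ℝ) / centralTrinomial 7 ∈
      Set.Icc (ratioBound 2 (7 : ℕ)) (ratioBound 1 (7 : ℕ)) := by
  rw [show centralTrinomial 8 = 1107 by decide, show centralTrinomial 7 = 393 by decide,
    ratioBound_eq _ (by norm_num), ratioBound_eq _ (by norm_num)]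
  norm_num

theorem stmt_16
    (b : ℕ → ℕ)
    (hb : ∀ n, b n = ∑ k ∈ Finset.range (n / 2 + 1),
      Nat.choose n (2 * k) * Nat.choose (2 * k) k) :
    ∀ n, 8 ≤ n → b (n - 1) * b (n + 1) > (b n) ^ 2 := by
  obtain rfl : b = centralTrinomial := funext hb
  intro n hn
  obtain ⟨m, rfl⟩ : ∃ m, n = m + 1 := ⟨n - 1, by omega⟩
  have hpos (n : ℕ) : (0 : ℝ) < centralTrinomial n := by exact_mod_cast centralTrinomial_pos n
  have hlog := sq_lt_mul_of_ratio_mem_Icc hpos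
    (fun n ↦ by exact_mod_cast centralTrinomial_recurrence n) le_rfl
    centralTrinomial_ratio_seven_mem_Icc (by omega : 7 ≤ m)
  rw [Nat.add_sub_cancel]
  exact_mod_cast hlog
end
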